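/- Let λ ∈ ℝ and let r : I → ℝ³∖{0} be a non-colliding solution of the Poincaré problem in ℝ³∖{0} with (constant, nonzero) Poincaré vector L. Then for every t ∈ I, the acceleration r̈(t) is a scalar multiple of |r(t)| L − λ r(t), which is (a positive multiple of) the normal vector of the cone {x ∈ ℝ³∖{0} : ⟨x, L⟩ = λ|x|} at the point r(t). Consequently r is a geodesic on this cone: r lies on the cone and its acceleration is everywhere orthogonal to the tangent space of the cone. -/

import Mathlib

/-!
Pointwise algebra suffices. Since `r × ṙ = L - (λ/|r|) r`, the force `λ (r × ṙ)/|r|³` equals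
`(λ/|r|⁴) (|r| L - λ r)`, a multiple of the cone normal; and pairing the definition of `L` with
`r` kills the cross product, leaving `⟨r, L⟩ = λ |r|`, so `r` lies on the cone.
-/

open scoped InnerProductSpace

/-- The cross product on Euclidean 3-space. -/
noncomputable def cross3 (x y : EuclideanSpace ℝ (Fin 3)) : EuclideanSpace ℝ (Fin 3) :=
  (WithLp.equiv 2 (Fin 3 → ℝ)).symm
    ![x 1 * y 2 - x 2 * y 1, x 2 * y 0 - x 0 * y 2, x 0 * y 1 - x 1 * y 0]

noncomputable def poincareVector (lam : ℝ) (x v : EuclideanSpace ℝ (Fin 3)) :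
    EuclideanSpace ℝ (Fin 3) :=
  cross3 x v + (lam / ‖x‖) • x

lemma inner_cross3_self_left (x y : EuclideanSpace ℝ (Fin 3)) : ⟪x, cross3 x y⟫_ℝ = 0 := by
  simp only [cross3, PiLp.inner_apply, RCLike.inner_apply, conj_trivial, Fin.sum_univ_three,
    WithLp.equiv_symm_apply, Matrix.cons_val]
  ring

lemma inner_poincareVector_self_left (lam : ℝ) (x v : EuclideanSpace ℝ (Fin 3)) :
    ⟪x, poincareVector lam x v⟫_ℝ = lam * ‖x‖ := by
  rw [poincareVector, inner_add_right, inner_smul_right, inner_cross3_self_left,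
    real_inner_self_eq_norm_sq, zero_add]
  rcases eq_or_ne ‖x‖ 0 with hx | hx
  · simp [hx]
  · field_simp

lemma smul_cross3_eq_smul_sub_of_ne_zero (lam : ℝ) {x : EuclideanSpace ℝ (Fin 3)} (hx : x ≠ 0)
    (v : EuclideanSpace ℝ (Fin 3)) :
    (lam / ‖x‖ ^ 3) • cross3 x v =
      (lam / ‖x‖ ^ 4) • (‖x‖ • poincareVector lam x v - lam • x) := by
  have hnorm : ‖x‖ ≠ 0 := norm_ne_zero_iff.mpr hx
  rw [poincareVector]
  match_scalars <;> field_simp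
  ring

theorem poincare_geodesic_on_cone_general
    (lam : ℝ) (I : Set ℝ)
    (r r' r'' : ℝ → EuclideanSpace ℝ (Fin 3))
    (hne : ∀ t ∈ I, r t ≠ 0)
    (hode : ∀ t ∈ I, r'' t = (lam / ‖r t‖ ^ 3) • cross3 (r t) (r' t))
    (L : EuclideanSpace ℝ (Fin 3))
    (hL : ∀ t ∈ I, cross3 (r t) (r' t) + (lam / ‖r t‖) • r t = L) :
    ∀ t ∈ I,
      (∃ c : ℝ, r'' t = c • (‖r t‖ • L - lam • r t)) ∧
      ⟪r t, L⟫_ℝ = lam * ‖r t‖ ∧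
      (∀ w : EuclideanSpace ℝ (Fin 3),
        ⟪‖r t‖ • L - lam • r t, w⟫_ℝ = 0 → ⟪r'' t, w⟫_ℝ = 0) := by
  intro t ht
  have hPL : poincareVector lam (r t) (r' t) = L := hL t ht
  have hacc : r'' t = (lam / ‖r t‖ ^ 4) • (‖r t‖ • L - lam • r t) := by
    rw [hode t ht, smul_cross3_eq_smul_sub_of_ne_zero lam (hne t ht), hPL]
  refine ⟨⟨_, hacc⟩, hPL ▸ inner_poincareVector_self_left lam (r t) (r' t), fun w hw => ?_⟩
  rw [hacc, inner_smul_left, hw, mul_zero]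

/-- Let `r` be a non-colliding solution of the Poincaré problem in
`ℝ³ ∖ {0}` with constant, nonzero Poincaré vector `L`. Then for every `t ∈ I` the
acceleration `r̈(t)` is a scalar multiple of `|r(t)| L − λ r(t)` (the normal vector of
the cone `{x : ⟨x, L⟩ = λ|x|}` at `r(t)`); consequently `r` is a geodesic on this cone:
`r` lies on the cone and its acceleration is orthogonal to the tangent space of the cone
(the orthogonal complement of the gradient `|x| L − λ x`). -/
theorem poincare_geodesic_on_cone
    (lam : ℝ) (I : Set ℝ) (hIopen : IsOpen I) (hIconn : I.OrdConnected)
    (r r' r'' : ℝ → EuclideanSpace ℝ (Fin 3))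
    (hne : ∀ t ∈ I, r t ≠ 0)
    (hd1 : ∀ t ∈ I, HasDerivAt r (r' t) t)
    (hd2 : ∀ t ∈ I, HasDerivAt r' (r'' t) t)
    (hC2 : ContinuousOn r'' I)
    (hode : ∀ t ∈ I, r'' t = (lam / ‖r t‖ ^ 3) • cross3 (r t) (r' t))
    (hnoncoll : ¬ (∀ t ∈ I, ∃ c : ℝ, r' t = c • r t))
    (L : EuclideanSpace ℝ (Fin 3)) (hL0 : L ≠ 0)
    (hL : ∀ t ∈ I, cross3 (r t) (r' t) + (lam / ‖r t‖) • r t = L) :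
    ∀ t ∈ I,
      (∃ c : ℝ, r'' t = c • (‖r t‖ • L - lam • r t)) ∧
      ⟪r t, L⟫_ℝ = lam * ‖r t‖ ∧
      (∀ w : EuclideanSpace ℝ (Fin 3),
        ⟪‖r t‖ • L - lam • r t, w⟫_ℝ = 0 → ⟪r'' t, w⟫_ℝ = 0) :=
  poincare_geodesic_on_cone_general lam I r r' r'' hne hode L hL
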